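/- Let E be a real vector space with nondegenerate symmetric bilinear form, J an orthogonal complex structure with +i-eigenspace L ⊂ E_ℂ, and K ⊂ E isotropic with JK = K. Then K_ℂ^⊥ = (L ∩ K_ℂ^⊥) + (L̄ ∩ K_ℂ^⊥), and consequently the reduced isotropic L_red = (L ∩ K_ℂ^⊥ + K_ℂ ∩ K_ℂ^⊥)/(K_ℂ ∩ K_ℂ^⊥) satisfies L_red + L̄_red = K_ℂ^⊥/(K_ℂ ∩ K_ℂ^⊥), i.e. L_red is a maximal isotropic of real index zero, defining a complex structure on the reduction. -/
import Mathlib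


open TensorProduct

section Setup

variable {E : Type*} [AddCommGroup E] [Module ℝ E]

/-- The canonical real-linear inclusion `E → ℂ ⊗ E`, `x ↦ 1 ⊗ x`. -/
noncomputable def toC : E →ₗ[ℝ] ℂ ⊗[ℝ] E := TensorProduct.mk ℝ ℂ E 1

/-- The complexification `K ⊗ ℂ` of a real subspace `K ⊆ E`, inside `ℂ ⊗ E`. -/
noncomputable def cplxSub (K : Submodule ℝ E) : Submodule ℂ (ℂ ⊗[ℝ] E) :=
  Submodule.span ℂ (toC '' (K : Set E))

/-- The complex-bilinear extension of a real bilinear form to `ℂ ⊗ E`. -/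
noncomputable def cplxForm (B : LinearMap.BilinForm ℝ E) :
    LinearMap.BilinForm ℂ (ℂ ⊗[ℝ] E) :=
  LinearMap.BilinForm.baseChange ℂ B

/-- The `+i`-eigenspace `L ⊂ E ⊗ ℂ` of (the complexification of) `J`. -/
noncomputable def eigenI (J : E →ₗ[ℝ] E) : Submodule ℂ (ℂ ⊗[ℝ] E) :=
  LinearMap.ker (J.baseChange ℂ - Complex.I • LinearMap.id)

/-- The `−i`-eigenspace `L̄ ⊂ E ⊗ ℂ`, the complex conjugate of `L`. -/
noncomputable def eigenMinusI (J : E →ₗ[ℝ] E) : Submodule ℂ (ℂ ⊗[ℝ] E) :=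
  LinearMap.ker (J.baseChange ℂ + Complex.I • LinearMap.id)

def IsIsotropicSub (B : LinearMap.BilinForm ℝ E) (W : Submodule ℝ E) : Prop :=
  ∀ x ∈ W, ∀ y ∈ W, B x y = 0

end Setup

set_option maxHeartbeats 1000000 in
/-- Let `E` carry a nondegenerate symmetric bilinear form, `J`
an orthogonal complex structure with `+i`-eigenspace `L`, and `K ⊆ E` isotropic
with `JK = K`.  Then `K_ℂ^⊥ = (L ∩ K_ℂ^⊥) + (L̄ ∩ K_ℂ^⊥)`, and consequently
`L_red + L̄_red` is everything:
`(L ∩ K_ℂ^⊥ + K_ℂ) + (L̄ ∩ K_ℂ^⊥ + K_ℂ) = K_ℂ^⊥`, i.e. the reduced maximal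
isotropic `L_red` has real index zero and defines a complex structure on the
reduction. -/
theorem statement_14 {E : Type*} [AddCommGroup E] [Module ℝ E] [FiniteDimensional ℝ E]
    (B : LinearMap.BilinForm ℝ E)
    (hB : B.Nondegenerate) (hsymm : ∀ x y, B x y = B y x)
    (J : E →ₗ[ℝ] E)
    (hJ2 : J ∘ₗ J = - LinearMap.id)
    (hJorth : ∀ u v, B (J u) (J v) = B u v)
    (K : Submodule ℝ E)
    (hKiso : IsIsotropicSub B K)
    (hJK : K.map J = K) :
    (cplxForm B).orthogonal (cplxSub K)
      = (eigenI J ⊓ (cplxForm B).orthogonal (cplxSub K))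
          ⊔ (eigenMinusI J ⊓ (cplxForm B).orthogonal (cplxSub K)) ∧
    ((eigenI J ⊓ (cplxForm B).orthogonal (cplxSub K) ⊔ cplxSub K)
        ⊔ (eigenMinusI J ⊓ (cplxForm B).orthogonal (cplxSub K) ⊔ cplxSub K))
      = (cplxForm B).orthogonal (cplxSub K) := by
  set Bc := cplxForm B with hBc
  set Jc := J.baseChange ℂ with hJcdef
  set O := Bc.orthogonal (cplxSub K) with hO
  -- Jc squared is -1
  have hJc2 : ∀ x : ℂ ⊗[ℝ] E, Jc (Jc x) = -x := by
    intro x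
    have : Jc ∘ₗ Jc = (J ∘ₗ J).baseChange ℂ := (LinearMap.baseChange_comp J J).symm
    rw [hJ2] at this
    have h2 : (- LinearMap.id : E →ₗ[ℝ] E) = (-1 : ℝ) • LinearMap.id := by
      simp
    rw [h2, LinearMap.baseChange_smul, LinearMap.baseChange_id] at this
    have := congrArg (fun f => f x) this
    simpa using this
  -- Jc is orthogonal for Bc
  have hJcorth : ∀ u v : ℂ ⊗[ℝ] E, Bc (Jc u) (Jc v) = Bc u v := by
    intro u v
    induction u using TensorProduct.induction_on with
    | zero => simp
    | tmul a m =>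
      induction v using TensorProduct.induction_on with
      | zero => simp
      | tmul b n =>
        simp [hBc, cplxForm, Jc, hJorth]
      | add v₁ v₂ h₁ h₂ => simp [map_add, h₁, h₂]
    | add u₁ u₂ h₁ h₂ =>
      simp only [map_add, LinearMap.add_apply] at *
      rw [h₁, h₂]
  -- Jc preserves K_ℂ
  have hJcK : ∀ m ∈ cplxSub K, Jc m ∈ cplxSub K := by
    intro m hm
    refine Submodule.span_induction (p := fun m _ => Jc m ∈ cplxSub K) ?_ ?_ ?_ ?_ hm
    · rintro _ ⟨k, hk, rfl⟩
      have : Jc (toC k) = toC (J k) := by simp [Jc, toC]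
      rw [this]
      have hJk : J k ∈ K := by
        rw [← hJK]; exact Submodule.mem_map_of_mem hk
      exact Submodule.subset_span ⟨J k, hJk, rfl⟩
    · simp
    · intro x y _ _ hx hy; rw [map_add]; exact Submodule.add_mem _ hx hy
    · intro c x _ hx; rw [map_smul]; exact Submodule.smul_mem _ c hx
  -- Jc preserves O
  have hJcO : ∀ m ∈ O, Jc m ∈ O := by
    intro m hm n hn
    have hn' : Jc (-(Jc n)) = n := by rw [map_neg, hJc2, neg_neg]
    show Bc n (Jc m) = 0
    have heq : Bc n (Jc m) = Bc (Jc (-(Jc n))) (Jc m) := by rw [hn']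
    rw [heq, hJcorth]
    exact hm _ (Submodule.neg_mem _ (hJcK n hn))
  -- K_ℂ is isotropic, hence K_ℂ ⊆ O
  have hKO : cplxSub K ≤ O := by
    intro m hm n hn
    refine Submodule.span_induction (p := fun m _ => Bc n m = 0) ?_ ?_ ?_ ?_ hm
    · rintro _ ⟨k, hk, rfl⟩
      refine Submodule.span_induction (p := fun n _ => Bc n (toC k) = 0) ?_ ?_ ?_ ?_ hn
      · rintro _ ⟨k', hk', rfl⟩
        simp [hBc, cplxForm, toC, hKiso k' hk' k hk]
      · simp
      · intro x y _ _ hx hy; rw [map_add, LinearMap.add_apply, hx, hy, add_zero]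
      · intro c x _ hx; rw [map_smul, LinearMap.smul_apply, hx, smul_zero]
    · simp
    · intro x y _ _ hx hy; rw [map_add, hx, hy, add_zero]
    · intro c x _ hx; rw [map_smul, hx, smul_zero]
  -- the decomposition
  have hdecomp : O = (eigenI J ⊓ O) ⊔ (eigenMinusI J ⊓ O) := by
    refine le_antisymm ?_ (sup_le inf_le_right inf_le_right)
    intro x hx
    set a : ℂ ⊗[ℝ] E := (2 : ℂ)⁻¹ • (x - Complex.I • Jc x) with ha
    set b : ℂ ⊗[ℝ] E := (2 : ℂ)⁻¹ • (x + Complex.I • Jc x) with hb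
    have hab : a + b = x := by
      rw [ha, hb, ← smul_add]
      rw [show x - Complex.I • Jc x + (x + Complex.I • Jc x) = (2 : ℂ) • x by
        rw [two_smul]; abel]
      rw [smul_smul]
      norm_num
    have haL : a ∈ eigenI J := by
      simp only [eigenI, LinearMap.mem_ker, LinearMap.sub_apply, LinearMap.smul_apply,
        LinearMap.id_apply, sub_eq_zero]
      have h1 : Jc a = (2 : ℂ)⁻¹ • (Jc x + Complex.I • x) := by
        rw [ha, map_smul, map_sub, map_smul, hJc2, smul_neg, sub_neg_eq_add]
      have h2 : Complex.I • a = (2 : ℂ)⁻¹ • (Complex.I • x + Jc x) := by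
        rw [ha, smul_comm, smul_sub, smul_smul Complex.I Complex.I, Complex.I_mul_I,
          neg_one_smul, sub_neg_eq_add]
      rw [h1, h2, add_comm]
    have hbL : b ∈ eigenMinusI J := by
      simp only [eigenMinusI, LinearMap.mem_ker, LinearMap.add_apply, LinearMap.smul_apply,
        LinearMap.id_apply]
      have h1 : Jc b = (2 : ℂ)⁻¹ • (Jc x - Complex.I • x) := by
        rw [hb, map_smul, map_add, map_smul, hJc2, smul_neg, ← sub_eq_add_neg]
      have h2 : Complex.I • b = (2 : ℂ)⁻¹ • (Complex.I • x - Jc x) := by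
        rw [hb, smul_comm, smul_add, smul_smul Complex.I Complex.I, Complex.I_mul_I,
          neg_one_smul, ← sub_eq_add_neg]
      rw [h1, h2, ← smul_add,
        show Jc x - Complex.I • x + (Complex.I • x - Jc x) = 0 by abel, smul_zero]
    have haO : a ∈ O := Submodule.smul_mem _ _
      (Submodule.sub_mem _ hx (Submodule.smul_mem _ _ (hJcO x hx)))
    have hbO : b ∈ O := Submodule.smul_mem _ _
      (Submodule.add_mem _ hx (Submodule.smul_mem _ _ (hJcO x hx)))
    rw [← hab]
    exact Submodule.add_mem _
      (Submodule.mem_sup_left ⟨haL, haO⟩)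
      (Submodule.mem_sup_right ⟨hbL, hbO⟩)
  refine ⟨hdecomp, le_antisymm ?_ ?_⟩
  · refine sup_le (sup_le ?_ ?_) (sup_le ?_ ?_)
    · exact inf_le_right
    · exact hKO
    · exact inf_le_right
    · exact hKO
  · exact hdecomp.le.trans (sup_le_sup le_sup_left le_sup_left)
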